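/- arXiv:1008.4120 — 3 statements merged into one kernel-verified Lean document; each statement's English description precedes it below -/
import Mathlib

section
/- Let X be a separable, locally compact metric space, let Y ⊆ X, and let π : Y → E be a coordinate patch of a differentiable structure on the metric measure space (X,d,μ). Let f : X → ℝ be Lipschitz with compact support, let ε > 0, and let ν be a Radon measure concentrated on the set Y_f of differentiability points of f. Then there exists a compact set Z ⊆ Y_f with ν(Y ∖ Z) < ε and a continuous function η : [0,∞) → [0,∞) with η(0) = 0, such that for every z ∈ Z and every r > 0, the restriction of the error function E^f_z to Z ∩ B_r(z) has Lipschitz constant at most η(r). -/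
/-!
Egorov's theorem, applied to the sets on which the estimate `|E^f_y(x)| ≤ d(x, y) / (j + 1)`
holds for `d(x, y) < 1 / (n + 1)` (measurable by separability), Lusin's theorem for `Df` and
inner regularity give a compact set `Z` of almost full measure on which `f` is uniformly
differentiable and `Df` is uniformly continuous. As
`E^f_z(x) - E^f_z(y) = E^f_y(x) + ⟨Df y - Df z, π x - π y⟩`, the optimal Lipschitz constant of
`E^f_z` on `Z ∩ B_r(z)`, uniformly in `z ∈ Z`, then tends to `0` with `r`; averaging this monotone
modulus over `[r, 2r]` makes it continuous.
-/

open MeasureTheory Metric Topology Filter Asymptotics Set TopologicalSpace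
open scoped ENNReal NNReal RealInnerProductSpace

section Regularity

variable {α : Type*} [MeasurableSpace α] {μ : Measure α} [IsFiniteMeasure μ]

theorem exists_measurableSet_measure_compl_lt_forall_exists_subset {G : ℕ → ℕ → Set α}
    (hG : ∀ n j, MeasurableSet (G n j)) (hmono : ∀ j, Monotone (G · j))
    (hcover : ∀ j, ∀ᵐ x ∂μ, x ∈ ⋃ n, G n j) {δ : ℝ≥0∞} (hδ : δ ≠ 0) :
    ∃ A, MeasurableSet A ∧ μ Aᶜ < δ ∧ ∀ j, ∃ n, A ⊆ G n j := by
  obtain ⟨δ', hδ'0, hδ'⟩ := ENNReal.exists_pos_sum_of_countable' hδ ℕ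
  have hn : ∀ j, ∃ n, μ (G n j)ᶜ < δ' j := fun j => by
    have h := tendsto_measure_iInter_atTop (μ := μ) (fun n => (hG n j).compl.nullMeasurableSet)
      (fun n m h => compl_subset_compl.2 (hmono j h)) ⟨0, measure_ne_top μ _⟩
    rw [← compl_iUnion, show μ (⋃ n, G n j)ᶜ = 0 from ae_iff.1 (hcover j)] at h
    exact (h.eventually_lt_const (hδ'0 j)).exists
  choose n hn using hn
  refine ⟨⋂ j, G (n j) j, MeasurableSet.iInter fun j => hG _ _, ?_,
    fun j => ⟨n j, iInter_subset _ j⟩⟩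
  calc μ (⋂ j, G (n j) j)ᶜ = μ (⋃ j, (G (n j) j)ᶜ) := by rw [compl_iInter]
    _ ≤ ∑' j, μ (G (n j) j)ᶜ := measure_iUnion_le _
    _ ≤ ∑' j, δ' j := ENNReal.tsum_le_tsum fun j => (hn j).le
    _ < δ := hδ'

variable [TopologicalSpace α] [OpensMeasurableSpace α]

theorem MeasurableSet.exists_isClosed_measure_compl_lt_inter_eq
    [μ.WeaklyRegular] {A : Set α} (hA : MeasurableSet A) {δ : ℝ≥0∞} (hδ : δ ≠ 0) :
    ∃ C, IsClosed C ∧ μ Cᶜ < δ ∧ ∃ U, IsOpen U ∧ A ∩ C = U ∩ C := by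
  have hδ2 : δ / 2 ≠ 0 := (ENNReal.half_pos hδ).ne'
  obtain ⟨F, hFA, hF, hμF⟩ := hA.exists_isClosed_sdiff_lt (measure_ne_top μ A) hδ2
  obtain ⟨F', hFA', hF', hμF'⟩ := hA.compl.exists_isClosed_sdiff_lt (measure_ne_top μ _) hδ2
  refine ⟨F ∪ F', hF.union hF', ?_, F'ᶜ, hF'.isOpen_compl, ?_⟩
  · have : (F ∪ F')ᶜ ⊆ (A \ F) ∪ (Aᶜ \ F') := fun x hx => by
      by_cases hxA : x ∈ A
      · exact Or.inl ⟨hxA, fun h => hx (Or.inl h)⟩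
      · exact Or.inr ⟨hxA, fun h => hx (Or.inr h)⟩
    calc μ (F ∪ F')ᶜ ≤ μ (A \ F) + μ (Aᶜ \ F') := (measure_mono this).trans (measure_union_le _ _)
      _ < δ / 2 + δ / 2 := ENNReal.add_lt_add hμF hμF'
      _ = δ := ENNReal.add_halves δ
  · ext x
    constructor
    · rintro ⟨hxA, hxF | hxF'⟩
      · exact ⟨fun h => hFA' h hxA, Or.inl hxF⟩
      · exact absurd hxA (hFA' hxF')
    · rintro ⟨hxU, hxF | hxF'⟩
      · exact ⟨hFA hxF, Or.inl hxF⟩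
      · exact absurd hxF' hxU

theorem Measurable.exists_isClosed_measure_compl_lt_continuousOn
    [μ.WeaklyRegular] {β : Type*} [TopologicalSpace β] [SecondCountableTopology β]
    [MeasurableSpace β] [OpensMeasurableSpace β] {g : α → β} (hg : Measurable g)
    {δ : ℝ≥0∞} (hδ : δ ≠ 0) : ∃ L, IsClosed L ∧ μ Lᶜ < δ ∧ ContinuousOn g L := by
  have hB := isBasis_countableBasis β
  have : Countable (countableBasis β) := (countable_countableBasis β).to_subtype
  obtain ⟨δ', hδ'0, hδ'⟩ := ENNReal.exists_pos_sum_of_countable' hδ (countableBasis β)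
  have hC : ∀ t : countableBasis β, ∃ C, IsClosed C ∧ μ Cᶜ < δ' t ∧
      ∃ U, IsOpen U ∧ g ⁻¹' t ∩ C = U ∩ C := fun t =>
    (hg (hB.isOpen t.2).measurableSet).exists_isClosed_measure_compl_lt_inter_eq (hδ'0 t).ne'
  choose C hCc hCμ U hUo hU using hC
  refine ⟨⋂ t, C t, isClosed_iInter hCc, ?_, hB.continuousOn_iff.2 fun t ht => ⟨U ⟨t, ht⟩,
    hUo _, ?_⟩⟩
  · calc μ (⋂ t, C t)ᶜ = μ (⋃ t, (C t)ᶜ) := by rw [compl_iInter]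
      _ ≤ ∑' t, μ (C t)ᶜ := measure_iUnion_le _
      _ ≤ ∑' t, δ' t := ENNReal.tsum_le_tsum fun t => (hCμ t).le
      _ < δ := hδ'
  · have h : g ⁻¹' t ∩ C ⟨t, ht⟩ = U ⟨t, ht⟩ ∩ C ⟨t, ht⟩ := hU ⟨t, ht⟩
    rw [← inter_eq_right.2 (iInter_subset C ⟨t, ht⟩), ← inter_assoc, ← inter_assoc, h]

theorem MeasurableSet.exists_isCompact_subset_measure_compl_lt
    [T2Space α] [μ.InnerRegularCompactLTTop] {T : Set α} (hT : MeasurableSet T) {δ : ℝ≥0∞}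
    (hTδ : μ Tᶜ < δ) : ∃ Z ⊆ T, IsCompact Z ∧ μ Zᶜ < δ := by
  obtain ⟨Z, hZT, hZ, hμZ⟩ := hT.exists_isCompact_sdiff_lt (measure_ne_top μ T)
    (tsub_pos_of_lt hTδ).ne'
  refine ⟨Z, hZT, hZ, ?_⟩
  calc μ Zᶜ ≤ μ (Tᶜ ∪ T \ Z) := measure_mono fun x hx => by
        by_cases hxT : x ∈ T <;> simp_all
    _ ≤ μ Tᶜ + μ (T \ Z) := measure_union_le _ _
    _ < μ Tᶜ + (δ - μ Tᶜ) := ENNReal.add_lt_add_left (measure_ne_top μ _) hμZ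
    _ = δ := add_tsub_cancel_of_le hTδ.le

end Regularity

section Linearization

variable {X E : Type*} [NormedAddCommGroup E] [InnerProductSpace ℝ E] {f : X → ℝ} {π Df : X → E}

/-- The error term `E^f_y(x)`. -/
def linearizationError (f : X → ℝ) (π Df : X → E) (y x : X) : ℝ :=
  f x - f y - ⟪Df y, π x - π y⟫

theorem linearizationError_sub_linearizationError (z x y : X) :
    linearizationError f π Df z x - linearizationError f π Df z y =
      linearizationError f π Df y x + ⟪Df y - Df z, π x - π y⟫ := by
  simp only [linearizationError, inner_sub_left, inner_sub_right]
  ring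

variable [PseudoMetricSpace X]

def linearizationBoundSet (f : X → ℝ) (π Df : X → E) (δ c : ℝ) : Set X :=
  {y | ∀ x, dist x y < δ → |linearizationError f π Df y x| ≤ c * dist x y}

theorem lipschitzWith_linearizationError {Cf Cπ : ℝ≥0} (hf : LipschitzWith Cf f)
    (hπ : LipschitzWith Cπ π) (y : X) :
    LipschitzWith (Cf + ‖Df y‖₊ * Cπ) (linearizationError f π Df y) := by
  have hinner : LipschitzWith (‖Df y‖₊ * Cπ) fun x => ⟪Df y, π x - π y⟫ :=
    (innerSL ℝ (Df y)).lipschitz.comp (hπ.sub (LipschitzWith.const (π y))) |>.weaken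
      (by rw [add_zero]; gcongr; exact NNReal.coe_le_coe.1 (by simp [innerSL_apply_norm]))
  exact ((hf.sub (LipschitzWith.const (f y))).sub hinner).weaken (by rw [add_zero])

theorem linearizationBoundSet_anti {δ δ' c c' : ℝ} (hδ : δ ≤ δ') (hc : c ≤ c') :
    linearizationBoundSet f π Df δ' c ⊆ linearizationBoundSet f π Df δ c' :=
  fun _ hy x hx => (hy x (hx.trans_le hδ)).trans (by gcongr)

theorem exists_pos_mem_linearizationBoundSet {y : X}
    (hy : linearizationError f π Df y =o[𝓝 y] fun x => dist x y) {c : ℝ} (hc : 0 < c) :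
    ∃ δ > 0, y ∈ linearizationBoundSet f π Df δ c := by
  obtain ⟨δ, hδ, h⟩ := Metric.eventually_nhds_iff.1 (hy.def hc)
  exact ⟨δ, hδ, fun x hx => by simpa [abs_of_nonneg dist_nonneg] using h hx⟩

theorem measurableSet_linearizationBoundSet [SeparableSpace X] [MeasurableSpace X] [BorelSpace X]
    [MeasurableSpace E] [BorelSpace E] [SecondCountableTopology E]
    (hf : Continuous f) (hπ : Continuous π) (hDf : Measurable Df) (δ c : ℝ) :
    MeasurableSet (linearizationBoundSet f π Df δ c) := by
  obtain ⟨D, hDc, hDdense⟩ := exists_countable_dense X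
  -- By continuity in `x`, the defining bound need only be tested on the countable dense set `D`.
  have hDeq : linearizationBoundSet f π Df δ c =
      ⋂ x ∈ D, {y | dist x y < δ → |linearizationError f π Df y x| ≤ c * dist x y} := by
    refine Subset.antisymm (fun y hy => mem_iInter₂.2 fun x _ => hy x) fun y hy x hx => ?_
    have hclosed : IsClosed {x | |linearizationError f π Df y x| ≤ c * dist x y} :=
      isClosed_le (by unfold linearizationError; fun_prop) (by fun_prop)
    refine hclosed.closure_subset_iff.2 (fun x hx => ?_)
      (hDdense.open_subset_closure_inter isOpen_ball hx)
    exact mem_iInter₂.1 hy x hx.2 hx.1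
  rw [hDeq]
  refine MeasurableSet.biInter hDc fun x _ => measurableSet_setOfPred.2 (Measurable.imp ?_ ?_)
  · exact measurableSet_setOfPred.1 (measurableSet_lt (by fun_prop) measurable_const)
  · refine measurableSet_setOfPred.1 (measurableSet_le ?_ (by fun_prop))
    unfold linearizationError
    fun_prop

theorem LipschitzWith.lipschitzOnWith_linearizationError {Cπ : ℝ≥0} (hπ : LipschitzWith Cπ π)
    {Z : Set X} {δ a b r : ℝ} (hZ : Z ⊆ linearizationBoundSet f π Df δ a)
    (hDf : ∀ y ∈ Z, ∀ z ∈ Z, dist y z ≤ r → ‖Df y - Df z‖ ≤ b) (hr : 2 * r < δ) {z : X}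
    (hz : z ∈ Z) :
    LipschitzOnWith (a + b * Cπ).toNNReal (linearizationError f π Df z) (Z ∩ closedBall z r) := by
  refine LipschitzOnWith.of_dist_le_mul fun x ⟨hxZ, hxz⟩ y ⟨hyZ, hyz⟩ => ?_
  have hyz' : dist y z ≤ r := mem_closedBall.1 hyz
  have hxy : dist x y < δ :=
    (dist_triangle_right x y z).trans_lt (by linarith [mem_closedBall.1 hxz])
  have hb : ‖Df y - Df z‖ ≤ b := hDf y hyZ z hz hyz'
  have hπxy : ‖π x - π y‖ ≤ Cπ * dist x y := by
    simpa only [dist_eq_norm] using hπ.dist_le_mul x y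
  calc dist (linearizationError f π Df z x) (linearizationError f π Df z y)
      = |linearizationError f π Df y x + ⟪Df y - Df z, π x - π y⟫| := by
        rw [Real.dist_eq, linearizationError_sub_linearizationError]
    _ ≤ a * dist x y + b * (Cπ * dist x y) := by
        refine (abs_add_le _ _).trans (add_le_add (hZ hyZ x hxy) ?_)
        exact (abs_real_inner_le_norm _ _).trans
          (mul_le_mul hb hπxy (norm_nonneg _) ((norm_nonneg _).trans hb))
    _ ≤ (a + b * Cπ).toNNReal * dist x y := by
        rw [← mul_assoc, ← add_mul]
        exact mul_le_mul_of_nonneg_right (Real.le_coe_toNNReal _) dist_nonneg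

theorem IsCompact.exists_pos_lipschitzOnWith_linearizationError {Cπ : ℝ≥0}
    (hπ : LipschitzWith Cπ π) {Z : Set X} (hZ : IsCompact Z) (hDf : ContinuousOn Df Z)
    (hunif : ∀ c > 0, ∃ δ > 0, Z ⊆ linearizationBoundSet f π Df δ c) {c : ℝ} (hc : 0 < c) :
    ∃ t > 0, ∀ z ∈ Z,
      LipschitzOnWith c.toNNReal (linearizationError f π Df z) (Z ∩ closedBall z t) := by
  obtain ⟨δ, hδ, hZδ⟩ := hunif (c / 2) (half_pos hc)
  set b := c / (2 * (Cπ + 1))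
  obtain ⟨ρ, hρ, hDfρ⟩ := Metric.uniformContinuousOn_iff_le.1
    (hZ.uniformContinuousOn_of_continuous hDf) b (by positivity)
  refine ⟨min (δ / 3) ρ, by positivity, fun z hz => ?_⟩
  have hb : c / 2 + b * Cπ ≤ c := by
    have : b * Cπ ≤ c / 2 := by
      rw [div_mul_eq_mul_div, div_le_iff₀ (by positivity)]
      nlinarith [Cπ.2]
    linarith
  refine (hπ.lipschitzOnWith_linearizationError hZδ (fun y hy z hz hyz => ?_) ?_ hz).weaken
    (Real.toNNReal_le_toNNReal hb)
  · simpa only [dist_eq_norm] using hDfρ y hy z hz (hyz.trans (min_le_right _ _))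
  · linarith [min_le_left (δ / 3) ρ]

end Linearization

section UniformLinearization

variable {X E : Type*} [MetricSpace X] [NormedAddCommGroup E] [InnerProductSpace ℝ E]
  {f : X → ℝ} {π Df : X → E}

theorem exists_isCompact_continuousOn_subset_linearizationBoundSet [SeparableSpace X]
    [MeasurableSpace X] [BorelSpace X] [MeasurableSpace E] [BorelSpace E]
    [SecondCountableTopology E] (hf : Continuous f) (hπ : Continuous π) (hDf : Measurable Df)
    {Yf : Set X} (hdiff : ∀ y ∈ Yf, linearizationError f π Df y =o[𝓝 y] fun x => dist x y)
    (ν : Measure X) [IsFiniteMeasure ν] [ν.InnerRegularCompactLTTop] (hconc : ν Yfᶜ = 0)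
    {δ : ℝ≥0∞} (hδ : δ ≠ 0) :
    ∃ Z ⊆ Yf, IsCompact Z ∧ ν Zᶜ < δ ∧ ContinuousOn Df Z ∧
      ∀ c > 0, ∃ ρ > 0, Z ⊆ linearizationBoundSet f π Df ρ c := by
  obtain ⟨N, hYfN, hN, hνN⟩ := exists_measurable_superset_of_null hconc
  set G : ℕ → ℕ → Set X := fun n j =>
    linearizationBoundSet f π Df (1 / (n + 1)) (1 / (j + 1))
  have hGmono : ∀ j, Monotone (G · j) := fun j n m h =>
    linearizationBoundSet_anti (Nat.one_div_le_one_div h) le_rfl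
  have hcover : ∀ j, ∀ᵐ y ∂ν, y ∈ ⋃ n, G n j := fun j => by
    filter_upwards [(ae_iff.2 hconc : ∀ᵐ y ∂ν, y ∈ Yf)] with y hy
    obtain ⟨ρ, hρ, hyρ⟩ := exists_pos_mem_linearizationBoundSet (hdiff y hy) Nat.one_div_pos_of_nat
    obtain ⟨n, hn⟩ := exists_nat_one_div_lt hρ
    exact mem_iUnion.2 ⟨n, linearizationBoundSet_anti hn.le le_rfl hyρ⟩
  have hδ2 : δ / 2 ≠ 0 := (ENNReal.half_pos hδ).ne'
  obtain ⟨A, hA, hνA, hAG⟩ := exists_measurableSet_measure_compl_lt_forall_exists_subset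
    (fun n j => measurableSet_linearizationBoundSet hf hπ hDf _ _) hGmono hcover hδ2
  obtain ⟨L, hL, hνL, hDfL⟩ := hDf.exists_isClosed_measure_compl_lt_continuousOn (μ := ν) hδ2
  have hT : ν (Nᶜ ∩ A ∩ L)ᶜ < δ := calc
    ν (Nᶜ ∩ A ∩ L)ᶜ ≤ ν N + ν Aᶜ + ν Lᶜ := by
      rw [compl_inter, compl_inter, compl_compl]
      exact (measure_union_le _ _).trans (by gcongr; exact measure_union_le _ _)
    _ < δ / 2 + δ / 2 := by
      rw [hνN, zero_add]; exact ENNReal.add_lt_add hνA hνL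
    _ = δ := ENNReal.add_halves δ
  obtain ⟨Z, hZT, hZ, hνZ⟩ :=
    ((hN.compl.inter hA).inter hL.measurableSet).exists_isCompact_subset_measure_compl_lt hT
  refine ⟨Z, fun y hy => by_contra fun h => (hZT hy).1.1 (hYfN h), hZ, hνZ,
    hDfL.mono fun y hy => (hZT hy).2, fun c hc => ?_⟩
  obtain ⟨j, hj⟩ := exists_nat_one_div_lt hc
  obtain ⟨n, hn⟩ := hAG j
  exact ⟨1 / (n + 1), Nat.one_div_pos_of_nat,
    fun y hy => linearizationBoundSet_anti le_rfl hj.le (hn (hZT hy).1.2)⟩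

end UniformLinearization

theorem continuous_ite_nonpos_zero {g : ℝ → ℝ} (hg : ContinuousOn g (Ioi 0))
    (hg0 : Tendsto g (𝓝[>] 0) (𝓝 0)) : Continuous fun r => if r ≤ 0 then 0 else g r := by
  refine continuous_iff_continuousAt.2 fun r₀ => ?_
  rcases lt_trichotomy r₀ 0 with h | rfl | h
  · refine (continuousAt_const (y := (0 : ℝ))).congr ?_
    filter_upwards [Iio_mem_nhds h] with r hr using (if_pos hr.le).symm
  · refine continuousAt_iff_continuous_left_right.2
      ⟨continuousWithinAt_const.congr (fun r hr => if_pos hr) (if_pos le_rfl), ?_⟩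
    rw [← continuousWithinAt_Ioi_iff_Ici, ContinuousWithinAt, if_pos le_rfl]
    refine hg0.congr' ?_
    filter_upwards [self_mem_nhdsWithin] with r (hr : 0 < r) using (if_neg hr.not_ge).symm
  · refine (hg.continuousAt (Ioi_mem_nhds h)).congr ?_
    filter_upwards [Ioi_mem_nhds h] with r (hr : 0 < r) using (if_neg hr.not_ge).symm

theorem Monotone.mul_sub_le_intervalIntegral {K : ℝ → ℝ} (hK : Monotone K) {a b : ℝ}
    (hab : a ≤ b) : K a * (b - a) ≤ ∫ t in a..b, K t ∧ ∫ t in a..b, K t ≤ K b * (b - a) := by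
  have hconst : ∀ c : ℝ, ∫ _ in a..b, c = c * (b - a) := fun c => by
    rw [intervalIntegral.integral_const, smul_eq_mul, mul_comm]
  rw [← hconst, ← hconst]
  exact ⟨intervalIntegral.integral_mono_on hab intervalIntegrable_const hK.intervalIntegrable
      fun t ht => hK ht.1,
    intervalIntegral.integral_mono_on hab hK.intervalIntegrable intervalIntegrable_const
      fun t ht => hK ht.2⟩

theorem exists_continuous_strictMajorant {K : ℝ → ℝ} (hK : Monotone K) (hK0 : ∀ r, 0 ≤ K r)
    (hlim : Tendsto K (𝓝[>] 0) (𝓝 0)) :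
    ∃ η : ℝ → ℝ, Continuous η ∧ η 0 = 0 ∧ (∀ r, 0 ≤ η r) ∧ ∀ r, 0 < r → K r < η r := by
  set F : ℝ → ℝ := fun r => ∫ t in (0 : ℝ)..r, K t
  have hF : Continuous F :=
    intervalIntegral.continuous_primitive (fun _ _ => hK.intervalIntegrable) 0
  have hFsub : ∀ r, 0 < r → K r * r ≤ F (2 * r) - F r ∧ F (2 * r) - F r ≤ K (2 * r) * r :=
    fun r hr => by
      rw [intervalIntegral.integral_interval_sub_left hK.intervalIntegrable
        hK.intervalIntegrable]
      simpa [two_mul] using hK.mul_sub_le_intervalIntegral (by linarith : r ≤ 2 * r)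
  -- `(F (2r) - F r) / r` is the mean of `K` over `[r, 2r]`, squeezed between `K r` and `K (2r)`;
  -- adding `r` makes the majorant strict.
  set g : ℝ → ℝ := fun r => (F (2 * r) - F r) / r + r
  have hKg : ∀ r, 0 < r → K r < g r := fun r hr => by
    have := (le_div_iff₀ hr).2 (hFsub r hr).1
    simp only [g]; linarith
  have hgK : ∀ r, 0 < r → g r ≤ K (2 * r) + r := fun r hr => by
    have := (div_le_iff₀ hr).2 (hFsub r hr).2
    simp only [g]; linarith
  have hg : ContinuousOn g (Ioi 0) := fun r (hr : 0 < r) =>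
    ((((hF.comp (continuous_const_mul 2)).sub hF).continuousAt.div continuousAt_id
      hr.ne').add continuousAt_id).continuousWithinAt
  have hg0 : Tendsto g (𝓝[>] 0) (𝓝 0) := by
    have h2 : Tendsto (fun r : ℝ => 2 * r) (𝓝[>] 0) (𝓝[>] 0) := by
      refine tendsto_nhdsWithin_iff.2 ⟨?_, eventually_nhdsWithin_of_forall
        fun r (hr : 0 < r) => by simp [hr]⟩
      exact ((continuous_const_mul (2 : ℝ)).tendsto' 0 0 (by simp)).mono_left nhdsWithin_le_nhds
    have hup : Tendsto (fun r => K (2 * r) + r) (𝓝[>] 0) (𝓝 0) := by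
      simpa using (hlim.comp h2).add (tendsto_nhdsWithin_of_tendsto_nhds tendsto_id)
    refine tendsto_of_tendsto_of_tendsto_of_le_of_le' tendsto_const_nhds hup ?_ ?_
    all_goals filter_upwards [self_mem_nhdsWithin] with r (hr : 0 < r)
    · exact (hK0 r).trans (hKg r hr).le
    · exact hgK r hr
  refine ⟨fun r => if r ≤ 0 then 0 else g r, continuous_ite_nonpos_zero hg hg0, if_pos le_rfl,
    fun r => ?_, fun r hr => ?_⟩
  · dsimp only
    split_ifs with h
    · exact le_rfl
    · exact (hK0 r).trans (hKg r (not_le.1 h)).le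
  · simpa only [if_neg hr.not_ge] using hKg r hr

theorem exists_continuous_modulus {P : ℝ → ℝ → Prop}
    (hP : ∀ ⦃r r' L L' : ℝ⦄, r' ≤ r → L ≤ L' → P r L → P r' L')
    (hbound : ∃ M, ∀ r, P r M) (hsmall : ∀ c > 0, ∃ t > 0, P t c) :
    ∃ η : ℝ → ℝ, Continuous η ∧ η 0 = 0 ∧ (∀ r, 0 ≤ η r) ∧ ∀ r, 0 < r → P r (η r) := by
  obtain ⟨M, hM⟩ := hbound
  -- The infimum `K r` need not be attained, hence the strict majorant below.
  set K : ℝ → ℝ := fun r => sInf {L | 0 ≤ L ∧ P r L}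
  have hne : ∀ r, {L | 0 ≤ L ∧ P r L}.Nonempty := fun r =>
    ⟨max M 0, le_max_right _ _, hP le_rfl (le_max_left _ _) (hM r)⟩
  have hbdd : ∀ r, BddBelow {L | 0 ≤ L ∧ P r L} := fun r => ⟨0, fun _ hL => hL.1⟩
  have hK0 : ∀ r, 0 ≤ K r := fun r => le_csInf (hne r) fun _ hL => hL.1
  have hKle : ∀ {r t c}, r ≤ t → 0 ≤ c → P t c → K r ≤ c := fun hrt hc hP' =>
    csInf_le (hbdd _) ⟨hc, hP hrt le_rfl hP'⟩
  have hKmono : Monotone K := fun r r' h =>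
    le_csInf (hne r') fun L hL => hKle h hL.1 hL.2
  have hKlim : Tendsto K (𝓝[>] 0) (𝓝 0) := by
    refine tendsto_order.2 ⟨fun a ha => Eventually.of_forall fun r => ha.trans_le (hK0 r),
      fun a ha => ?_⟩
    obtain ⟨t, ht, hPt⟩ := hsmall (a / 2) (half_pos ha)
    filter_upwards [Ioo_mem_nhdsGT ht] with r hr
    exact (hKle hr.2.le (half_pos ha).le hPt).trans_lt (half_lt_self ha)
  obtain ⟨η, hηc, hη0, hηnn, hKη⟩ := exists_continuous_strictMajorant hKmono hK0 hKlim
  refine ⟨η, hηc, hη0, hηnn, fun r hr => ?_⟩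
  obtain ⟨L, hL, hLη⟩ := exists_lt_of_csInf_lt (hne r) (hKη r hr)
  exact hP le_rfl hLη.le hL.2

theorem stmt1_general {X : Type*} [MetricSpace X] [TopologicalSpace.SeparableSpace X]
    [MeasurableSpace X] [BorelSpace X]
    {E : Type*} [NormedAddCommGroup E] [InnerProductSpace ℝ E] [FiniteDimensional ℝ E]
    [MeasurableSpace E] [BorelSpace E]
    (Y Yf : Set X)
    (π : X → E) (Cπ : NNReal) (hπ : LipschitzWith Cπ π)
    (f : X → ℝ) (Cf : NNReal) (hf : LipschitzWith Cf f)
    (Df : X → E) (hDf : Measurable Df)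
    (hdiff : ∀ y ∈ Yf,
      (fun x => f x - f y - @inner ℝ E _ (Df y) (π x - π y)) =o[𝓝 y] (fun x => dist x y))
    (ν : Measure X) [IsFiniteMeasure ν] [ν.InnerRegular]
    (hconc : ν Yfᶜ = 0)
    (ε : ℝ) (hε : 0 < ε) :
    ∃ Z : Set X, Z ⊆ Yf ∧ IsCompact Z ∧ ν (Y \ Z) < ENNReal.ofReal ε ∧
      ∃ η : ℝ → ℝ, Continuous η ∧ η 0 = 0 ∧ (∀ r, 0 ≤ η r) ∧
        ∀ z ∈ Z, ∀ r : ℝ, 0 < r →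
          LipschitzOnWith (Real.toNNReal (η r))
            (fun x => f x - f z - @inner ℝ E _ (Df z) (π x - π z))
            (Z ∩ closedBall z r) := by
  obtain ⟨Z, hZYf, hZ, hνZ, hDfZ, hunif⟩ :=
    exists_isCompact_continuousOn_subset_linearizationBoundSet hf.continuous hπ.continuous hDf
      hdiff ν hconc (ENNReal.ofReal_pos.2 hε).ne'
  obtain ⟨M, hM⟩ := hZ.exists_bound_of_continuousOn hDfZ
  obtain ⟨η, hη, hη0, hηnn, hηZ⟩ := exists_continuous_modulus
    (P := fun r L => ∀ z ∈ Z,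
      LipschitzOnWith L.toNNReal (linearizationError f π Df z) (Z ∩ closedBall z r))
    (fun r r' L L' hr hL hP z hz => ((hP z hz).weaken (Real.toNNReal_le_toNNReal hL)).mono
      (inter_subset_inter_right _ (closedBall_subset_closedBall hr)))
    ⟨Cf + M * Cπ, fun r z hz => ((lipschitzWith_linearizationError hf hπ z).lipschitzOnWith).weaken
      (NNReal.le_toNNReal_of_coe_le (by push_cast; gcongr; exact hM z hz))⟩
    (fun c hc => hZ.exists_pos_lipschitzOnWith_linearizationError hπ hDfZ hunif hc)
  exact ⟨Z, hZYf, hZ, (measure_mono (sdiff_subset_compl Y Z)).trans_lt hνZ, η, hη, hη0,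
    hηnn, fun z hz r hr => hηZ r hr z hz⟩

/-- Uniform control of the error terms of a Cheeger–Keith differentiable
structure on a compact set of almost full measure (Lemma on uniform control of error
functions of a coordinate patch). -/
theorem stmt1 {X : Type*} [MetricSpace X] [TopologicalSpace.SeparableSpace X]
    [LocallyCompactSpace X] [MeasurableSpace X] [BorelSpace X]
    {E : Type*} [NormedAddCommGroup E] [InnerProductSpace ℝ E] [FiniteDimensional ℝ E]
    [MeasurableSpace E] [BorelSpace E]
    (Y Yf : Set X) (hYfY : Yf ⊆ Y)
    (π : X → E) (Cπ : NNReal) (hπ : LipschitzWith Cπ π)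
    (f : X → ℝ) (Cf : NNReal) (hf : LipschitzWith Cf f) (hfc : HasCompactSupport f)
    (Df : X → E) (hDf : Measurable Df)
    (hdiff : ∀ y ∈ Yf,
      (fun x => f x - f y - @inner ℝ E _ (Df y) (π x - π y)) =o[𝓝 y] (fun x => dist x y))
    (ν : Measure X) [IsFiniteMeasure ν] [ν.InnerRegular]
    (hconc : ν Yfᶜ = 0)
    (ε : ℝ) (hε : 0 < ε) :
    ∃ Z : Set X, Z ⊆ Yf ∧ IsCompact Z ∧ ν (Y \ Z) < ENNReal.ofReal ε ∧
      ∃ η : ℝ → ℝ, Continuous η ∧ η 0 = 0 ∧ (∀ r, 0 ≤ η r) ∧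
        ∀ z ∈ Z, ∀ r : ℝ, 0 < r →
          LipschitzOnWith (Real.toNNReal (η r))
            (fun x => f x - f z - @inner ℝ E _ (Df z) (π x - π z))
            (Z ∩ closedBall z r) :=
  stmt1_general Y Yf π Cπ hπ f Cf hf Df hDf hdiff ν hconc ε hε
end

section
/- There exists a 9-dimensional stratified Lie algebra g = span(u_1,u_2,u_3,u_4) ⊕ span(v_1,…,v_5) with brackets [u_1,u_2] = [u_3,u_4] = v_1, [u_1,u_3] = v_2, [u_1,u_4] = v_3, [u_2,u_3] = v_4, [u_2,u_4] = v_5, and all v_i central, such that: (a) no two linearly independent vectors in the horizontal layer V_1 = span(u_1,u_2,u_3,u_4) commute; but (b) the 2-vector w = u_1 ∧ u_2 − u_3 ∧ u_4 satisfies Σ-antisymmetrized bracket contraction zero, i.e., [u_1,u_2] − [u_3,u_4] = 0, so the associated invariant 2-precurrent is a cycle. -/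
open Submodule

/-- the standard basis of `ℝ⁹`; `e9 0, …, e9 3` play the role of `u₁,…,u₄` and
`e9 4, …, e9 8` the role of `v₁,…,v₅`. -/
noncomputable def e9 (i : Fin 9) : Fin 9 → ℝ := Pi.single i 1

/-- the horizontal layer `V₁ = span(u₁,u₂,u₃,u₄)`. -/
noncomputable def V1 : Submodule ℝ (Fin 9 → ℝ) :=
  Submodule.span ℝ {e9 0, e9 1, e9 2, e9 3}

/-- the second layer `V₂ = span(v₁,…,v₅)`. -/
noncomputable def V2 : Submodule ℝ (Fin 9 → ℝ) :=
  Submodule.span ℝ {e9 4, e9 5, e9 6, e9 7, e9 8}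

/-!
The bracket of `x, y` records the Plücker coordinates `p_ij = x_i y_j - x_j y_i` of the
horizontal parts of `x ∧ y`, except that `p_01` and `p_23` are merged into the single coefficient
`p_01 + p_23` of `v₁`; this merging is what makes `u₁ ∧ u₂ - u₃ ∧ u₄` a cycle. Brackets are central,
so the Jacobi identity is trivial. If horizontal `a, b` commute, then `p_02 = p_03 = p_12 = p_13 = 0`
and `p_23 = -p_01`, so the Plücker relation `p_01 p_23 - p_02 p_13 + p_03 p_12 = 0` gives
`p_01² = 0`. Hence every Plücker coordinate of `a ∧ b` vanishes and `a, b` are dependent.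
-/

section Plucker

variable {ι R : Type*} [CommRing R]

def pluckerCoord (a b : ι → R) (i j : ι) : R := a i * b j - a j * b i

lemma pluckerCoord_swap (a b : ι → R) (i j : ι) :
    pluckerCoord a b j i = -pluckerCoord a b i j := by
  unfold pluckerCoord; ring

lemma pluckerCoord_self (a b : ι → R) (i : ι) : pluckerCoord a b i i = 0 := by
  unfold pluckerCoord; ring

lemma pluckerCoord_relation (a b : ι → R) (i j k l : ι) :
    pluckerCoord a b i j * pluckerCoord a b k l - pluckerCoord a b i k * pluckerCoord a b j l +
      pluckerCoord a b i l * pluckerCoord a b j k = 0 := by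
  unfold pluckerCoord; ring

lemma not_linearIndependent_of_pluckerCoord_eq_zero [Nontrivial R] {a b : ι → R}
    (h : ∀ i j, pluckerCoord a b i j = 0) : ¬ LinearIndependent R ![a, b] := by
  rw [LinearIndependent.pair_iff]
  intro hind
  by_cases hb : b = 0
  · simpa using (hind 0 1 (by simp [hb])).2
  obtain ⟨i, hbi⟩ : ∃ i, b i ≠ 0 := Function.ne_iff.mp hb
  refine hbi (hind (b i) (-a i) (funext fun j => ?_)).1
  simpa [pluckerCoord, mul_comm, sub_eq_add_neg] using h j i

end Plucker

noncomputable def bracket : (Fin 9 → ℝ) →ₗ[ℝ] (Fin 9 → ℝ) →ₗ[ℝ] (Fin 9 → ℝ) :=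
  LinearMap.mk₂ ℝ (fun x y =>
    (pluckerCoord x y 0 1 + pluckerCoord x y 2 3) • e9 4 + pluckerCoord x y 0 2 • e9 5 +
      pluckerCoord x y 0 3 • e9 6 + pluckerCoord x y 1 2 • e9 7 + pluckerCoord x y 1 3 • e9 8)
  (by intro x x' y; simp only [pluckerCoord, Pi.add_apply]; module)
  (by intro c x y; simp only [pluckerCoord, Pi.smul_apply, smul_eq_mul]; module)
  (by intro x y y'; simp only [pluckerCoord, Pi.add_apply]; module)
  (by intro c x y; simp only [pluckerCoord, Pi.smul_apply, smul_eq_mul]; module)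

lemma bracket_apply (x y : Fin 9 → ℝ) : bracket x y =
    (pluckerCoord x y 0 1 + pluckerCoord x y 2 3) • e9 4 + pluckerCoord x y 0 2 • e9 5 +
      pluckerCoord x y 0 3 • e9 6 + pluckerCoord x y 1 2 • e9 7 + pluckerCoord x y 1 3 • e9 8 :=
  rfl

lemma bracket_swap (x y : Fin 9 → ℝ) : bracket x y = -bracket y x := by
  simp only [bracket_apply, pluckerCoord]; module

lemma bracket_apply_of_lt_four (x y : Fin 9 → ℝ) {i : Fin 9} (hi : (i : ℕ) < 4) :
    bracket x y i = 0 := by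
  fin_cases i <;> simp_all [bracket_apply, e9]

lemma bracket_eq_zero_of_horizontal_eq_zero {x : Fin 9 → ℝ}
    (hx : ∀ i : Fin 9, (i : ℕ) < 4 → x i = 0) (y : Fin 9 → ℝ) : bracket x y = 0 := by
  simp [bracket_apply, pluckerCoord, hx 0, hx 1, hx 2, hx 3]

lemma bracket_bracket (x y z : Fin 9 → ℝ) : bracket (bracket x y) z = 0 :=
  bracket_eq_zero_of_horizontal_eq_zero (fun _ hi => bracket_apply_of_lt_four x y hi) z

lemma bracket_e9_of_four_le {j : Fin 9} (hj : 4 ≤ (j : ℕ)) (x : Fin 9 → ℝ) :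
    bracket (e9 j) x = 0 :=
  bracket_eq_zero_of_horizontal_eq_zero
    (fun i hi => Pi.single_eq_of_ne (Fin.ne_of_val_ne (by omega)) 1) x

lemma bracket_mem_V2 (x y : Fin 9 → ℝ) : bracket x y ∈ V2 := by
  rw [bracket_apply, V2]
  refine add_mem (add_mem (add_mem (add_mem ?_ ?_) ?_) ?_) ?_ <;>
    exact smul_mem _ _ (subset_span (by simp))

lemma bracket_eq_zero_iff (x y : Fin 9 → ℝ) :
    bracket x y = 0 ↔ pluckerCoord x y 0 1 + pluckerCoord x y 2 3 = 0 ∧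
      pluckerCoord x y 0 2 = 0 ∧ pluckerCoord x y 0 3 = 0 ∧
      pluckerCoord x y 1 2 = 0 ∧ pluckerCoord x y 1 3 = 0 := by
  refine ⟨fun h => ?_, fun ⟨h1, h2, h3, h4, h5⟩ => by simp [bracket_apply, h1, h2, h3, h4, h5]⟩
  have h4 := congrFun h 4
  have h5 := congrFun h 5
  have h6 := congrFun h 6
  have h7 := congrFun h 7
  have h8 := congrFun h 8
  simp [bracket_apply, e9] at h4 h5 h6 h7 h8
  exact ⟨h4, h5, h6, h7, h8⟩

lemma apply_eq_zero_of_mem_V1 {a : Fin 9 → ℝ} (ha : a ∈ V1) {j : Fin 9} (hj : 4 ≤ (j : ℕ)) :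
    a j = 0 := by
  induction ha using Submodule.span_induction with
  | mem v hv =>
    simp only [Set.mem_insert_iff, Set.mem_singleton_iff] at hv
    rcases hv with rfl | rfl | rfl | rfl <;>
      exact Pi.single_eq_of_ne (Fin.ne_of_val_ne (by simp; omega)) 1
  | zero => rfl
  | add x y _ _ hx hy => simp [hx, hy]
  | smul c x _ hx => simp [hx]

lemma pluckerCoord_eq_zero_of_mem_V1 {a b : Fin 9 → ℝ} (ha : a ∈ V1) (hb : b ∈ V1)
    (h01 : pluckerCoord a b 0 1 = 0) (h02 : pluckerCoord a b 0 2 = 0)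
    (h03 : pluckerCoord a b 0 3 = 0) (h12 : pluckerCoord a b 1 2 = 0)
    (h13 : pluckerCoord a b 1 3 = 0) (h23 : pluckerCoord a b 2 3 = 0) (i j : Fin 9) :
    pluckerCoord a b i j = 0 := by
  have of_lt : ∀ i j : Fin 9, i < j → pluckerCoord a b i j = 0 := by
    intro i j hij
    by_cases hj : 4 ≤ (j : ℕ)
    · simp [pluckerCoord, apply_eq_zero_of_mem_V1 ha hj, apply_eq_zero_of_mem_V1 hb hj]
    fin_cases i <;> fin_cases j <;> first | assumption | simp at hij hj
  rcases lt_trichotomy i j with hij | rfl | hji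
  · exact of_lt i j hij
  · exact pluckerCoord_self a b i
  · rw [pluckerCoord_swap, of_lt j i hji, neg_zero]

lemma bracket_ne_zero_of_linearIndependent {a b : Fin 9 → ℝ} (ha : a ∈ V1) (hb : b ∈ V1)
    (hab : LinearIndependent ℝ ![a, b]) : bracket a b ≠ 0 := by
  intro h
  obtain ⟨hsum, h02, h03, h12, h13⟩ := (bracket_eq_zero_iff a b).mp h
  have h01 : pluckerCoord a b 0 1 = 0 := by
    have hrel := pluckerCoord_relation a b 0 1 2 3
    rw [h02, h03, eq_neg_of_add_eq_zero_right hsum] at hrel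
    exact pow_eq_zero_iff two_ne_zero |>.mp (by linear_combination -hrel)
  have h23 : pluckerCoord a b 2 3 = 0 := by linear_combination hsum - h01
  exact not_linearIndependent_of_pluckerCoord_eq_zero
    (pluckerCoord_eq_zero_of_mem_V1 ha hb h01 h02 h03 h12 h13 h23) hab

/-- there is a 9-dimensional stratified (step 2) Lie algebra structure on
`ℝ⁹ = V₁ ⊕ V₂` with brackets `[u₁,u₂] = [u₃,u₄] = v₁`, `[u₁,u₃] = v₂`, `[u₁,u₄] = v₃`,
`[u₂,u₃] = v₄`, `[u₂,u₄] = v₅` and all `vᵢ` central, such that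
(a) no two linearly independent horizontal vectors commute, yet
(b) `[u₁,u₂] − [u₃,u₄] = 0`, so the invariant 2-precurrent associated to
`u₁∧u₂ − u₃∧u₄` is a cycle. -/
theorem stmt15 :
    ∃ B : (Fin 9 → ℝ) →ₗ[ℝ] (Fin 9 → ℝ) →ₗ[ℝ] (Fin 9 → ℝ),
      (∀ x y, B x y = - B y x) ∧
      (∀ x y z, B (B x y) z + B (B y z) x + B (B z x) y = 0) ∧
      B (e9 0) (e9 1) = e9 4 ∧ B (e9 2) (e9 3) = e9 4 ∧
      B (e9 0) (e9 2) = e9 5 ∧ B (e9 0) (e9 3) = e9 6 ∧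
      B (e9 1) (e9 2) = e9 7 ∧ B (e9 1) (e9 3) = e9 8 ∧
      (∀ j : Fin 9, 4 ≤ (j : ℕ) → ∀ x, B (e9 j) x = 0) ∧
      (∀ x y, B x y ∈ V2) ∧
      (∀ a ∈ V1, ∀ b ∈ V1, LinearIndependent ℝ ![a, b] → B a b ≠ 0) ∧
      B (e9 0) (e9 1) - B (e9 2) (e9 3) = 0 := by
  have h01 : bracket (e9 0) (e9 1) = e9 4 := by simp [bracket_apply, pluckerCoord, e9]
  have h23 : bracket (e9 2) (e9 3) = e9 4 := by simp [bracket_apply, pluckerCoord, e9]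
  refine ⟨bracket, bracket_swap, fun x y z => by simp only [bracket_bracket, add_zero], h01, h23,
    ?_, ?_, ?_, ?_, fun j hj => bracket_e9_of_four_le hj, bracket_mem_V2,
    fun a ha b hb => bracket_ne_zero_of_linearIndependent ha hb, by rw [h01, h23, sub_self]⟩ <;>
  simp [bracket_apply, pluckerCoord, e9]
end

section
/- Let X be a locally compact separable metric space and T a metric k-current on X. Then T satisfies the alternating property: T(f, g^1,…,g^i,…,g^j,…,g^k) = −T(f, g^1,…,g^j,…,g^i,…,g^k) for any transposition of two of the Lipschitz arguments g^i, g^j. -/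
open MeasureTheory Metric Topology Filter NNReal

/-- A function is locally Lipschitz if it is Lipschitz on every compact set. -/
def LocLip {X : Type*} [MetricSpace X] (g : X → ℝ) : Prop :=
  ∀ K : Set X, IsCompact K → ∃ C : ℝ≥0, LipschitzOnWith C g K

/-- `(f, g¹, …, gᵏ)` is a compactly supported simple metric `k`-form:
`f` Lipschitz with compact support, each `gⁱ` locally Lipschitz. -/
def IsLipForm {X : Type*} [MetricSpace X] {k : ℕ} (f : X → ℝ) (g : Fin k → X → ℝ) : Prop :=
  (∃ C : ℝ≥0, LipschitzWith C f) ∧ HasCompactSupport f ∧ ∀ i, LocLip (g i)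

/-- Convergence of a sequence in `Lip_c(X)`: pointwise convergence with uniformly bounded
Lipschitz constants and uniformly compact supports. -/
def LipConvSeq {X : Type*} [MetricSpace X] (F : ℕ → X → ℝ) (f : X → ℝ) : Prop :=
  (∀ x, Tendsto (fun n => F n x) atTop (𝓝 (f x))) ∧
  (∃ C : ℝ≥0, LipschitzWith C f ∧ ∀ n, LipschitzWith C (F n)) ∧
  (∃ K : Set X, IsCompact K ∧ tsupport f ⊆ K ∧ ∀ n, tsupport (F n) ⊆ K)

/-- Convergence of a sequence in `Lip_loc(X)`: pointwise convergence with locally uniformly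
bounded Lipschitz constants. -/
def LocLipConvSeq {X : Type*} [MetricSpace X] (F : ℕ → X → ℝ) (g : X → ℝ) : Prop :=
  (∀ x, Tendsto (fun n => F n x) atTop (𝓝 (g x))) ∧
  (∀ K : Set X, IsCompact K → ∃ C : ℝ≥0, LipschitzOnWith C g K ∧ ∀ n, LipschitzOnWith C (F n) K)

/-- A metric `k`-current in the sense of Ambrosio–Kirchheim/Lang: a functional on
compactly supported simple metric `k`-forms that is multilinear, continuous and local. -/
structure MetricCurrent (X : Type*) [MetricSpace X] (k : ℕ) where
  toFun : (X → ℝ) → (Fin k → X → ℝ) → ℝ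
  add_left : ∀ f₁ f₂ g, IsLipForm f₁ g → IsLipForm f₂ g →
    toFun (fun x => f₁ x + f₂ x) g = toFun f₁ g + toFun f₂ g
  smul_left : ∀ (c : ℝ) f g, IsLipForm f g →
    toFun (fun x => c * f x) g = c * toFun f g
  add_right : ∀ f g (i : Fin k) (h : X → ℝ), IsLipForm f g → LocLip h →
    toFun f (Function.update g i (fun x => g i x + h x)) =
      toFun f g + toFun f (Function.update g i h)
  smul_right : ∀ f g (i : Fin k) (c : ℝ), IsLipForm f g →
    toFun f (Function.update g i (fun x => c * g i x)) = c * toFun f g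
  locality : ∀ f g, IsLipForm f g →
    (∃ i, ∀ x ∈ tsupport f, ∀ y ∈ tsupport f, g i x = g i y) → toFun f g = 0
  continuity : ∀ (F : ℕ → X → ℝ) (Gs : ℕ → Fin k → X → ℝ) (f : X → ℝ) (g : Fin k → X → ℝ),
    LipConvSeq F f → (∀ i, LocLipConvSeq (fun n => Gs n i) (g i)) →
    Tendsto (fun n => toFun (F n) (Gs n)) atTop (𝓝 (toFun f g))

/-- `ν` satisfies the defining inequality of the mass of `T`:
`|T(f,g)| ≤ (∏ᵢ Lip(gⁱ)) ∫ |f| dν` on compactly supported simple metric forms. -/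
def MassBound {X : Type*} [MetricSpace X] [MeasurableSpace X] {k : ℕ}
    (T : (X → ℝ) → (Fin k → X → ℝ) → ℝ) (ν : Measure X) : Prop :=
  ∀ (f : X → ℝ) (g : Fin k → X → ℝ) (C : Fin k → ℝ≥0),
    IsLipForm f g → (∀ i, LipschitzWith (C i) (g i)) →
    |T f g| ≤ (∏ i, (C i : ℝ)) * ∫ x, |f x| ∂ν

/-!
Alternation follows by polarization from `T(f, …, v, …, v, …) = 0`. For the latter, replace `v`
by a Lipschitz function `u` with values in `[0, L]` on `spt f`, cut `[0, 2L]` into `2N` tiles of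
width `h`, and write `u = E(u) + O(u)` with `E`, `O` the sums of the ramps over the even and over
the odd tiles. Two ramps over tiles with disjoint interiors pair to zero: each is constant where
the other varies, so a cutoff of `f` and locality kill the pairing when the tiles are strictly
apart, and continuity passes to touching tiles. All cross terms of `E` and `O` therefore vanish
and `T(…, u, …, u, …) = T(…, E - O, …, E - O, …)`. But `E - O` is a 1-Lipschitz zigzag of height
`h`, so continuity of `T` as `h → 0` gives `0`.
-/

section Ramps

def ramp (h t : ℝ) : ℝ := max 0 (min t h)

lemma lipschitzWith_ramp (h : ℝ) : LipschitzWith 1 (ramp h) :=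
  (LipschitzWith.id.min_const h).const_max 0

lemma monotone_ramp (h : ℝ) : Monotone (ramp h) := fun _ _ hst =>
  max_le_max le_rfl (min_le_min hst le_rfl)

lemma ramp_of_nonpos {h t : ℝ} (ht : t ≤ 0) : ramp h t = 0 :=
  max_eq_left ((min_le_left _ _).trans ht)

lemma ramp_of_le {h t : ℝ} (hh : 0 ≤ h) (ht : h ≤ t) : ramp h t = h := by
  rw [ramp, min_eq_right ht, max_eq_right hh]

lemma ramp_of_mem_Icc {h t : ℝ} (ht : t ∈ Set.Icc 0 h) : ramp h t = t := by
  rw [ramp, min_eq_left ht.2, max_eq_right ht.1]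

lemma ramp_sub_ramp_le (h : ℝ) {s t : ℝ} (hst : s ≤ t) : ramp h t - ramp h s ≤ t - s := by
  simp only [ramp, min_def, max_def]
  split_ifs <;> linarith

lemma ramp_add {a b : ℝ} (ha : 0 ≤ a) (hb : 0 ≤ b) (t : ℝ) :
    ramp (a + b) t = ramp a t + ramp b (t - a) := by
  simp only [ramp, min_def, max_def]
  split_ifs <;> linarith

/-- Ramps on the even tiles `[2mh, (2m+1)h]`, `m < N`; shifted by `h` they fill the odd tiles. -/
def evenRamps (h : ℝ) (N : ℕ) (t : ℝ) : ℝ :=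
  ∑ m ∈ Finset.range N, ramp h (t - 2 * m * h)

variable {h : ℝ}

lemma evenRamps_add_evenRamps_sub (hh : 0 ≤ h) (N : ℕ) (t : ℝ) :
    evenRamps h N t + evenRamps h N (t - h) = ramp (2 * N * h) t := by
  induction N with
  | zero => simp [evenRamps, ramp]
  | succ N ih =>
    have hN : (0 : ℝ) ≤ 2 * N * h := by positivity
    rw [show 2 * ((N + 1 : ℕ) : ℝ) * h = 2 * N * h + h + h by push_cast; ring,
      ramp_add (by positivity) hh, ramp_add hN hh, ← ih]
    simp only [evenRamps, Finset.sum_range_succ]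
    rw [show t - h - 2 * N * h = t - 2 * N * h - h by ring, sub_sub t (2 * N * h) h]
    ring

lemma monotone_evenRamps (N : ℕ) : Monotone (evenRamps h N) := fun _ _ hst =>
  Finset.sum_le_sum fun _ _ => monotone_ramp h (by linarith)

lemma evenRamps_sub_evenRamps_le (hh : 0 ≤ h) (N : ℕ) {s t : ℝ} (hst : s ≤ t) :
    evenRamps h N t - evenRamps h N s ≤ t - s := by
  have hsum := evenRamps_add_evenRamps_sub hh N t
  have hsum' := evenRamps_add_evenRamps_sub hh N s
  have hodd := monotone_evenRamps (h := h) N (show s - h ≤ t - h by linarith)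
  linarith [ramp_sub_ramp_le (2 * N * h) hst]

lemma lipschitzWith_evenRamps (hh : 0 ≤ h) (N : ℕ) : LipschitzWith 1 (evenRamps h N) := by
  refine LipschitzWith.of_le_add_mul 1 fun s t => ?_
  rw [NNReal.coe_one, one_mul, Real.dist_eq]
  rcases le_total s t with hst | hts
  · linarith [monotone_evenRamps (h := h) N hst, abs_nonneg (s - t)]
  · linarith [evenRamps_sub_evenRamps_le hh N hts, le_abs_self (s - t)]

/-- The triangle wave of height `h` obtained by alternating the signs of the ramps. -/
def zigzag (h : ℝ) (N : ℕ) (t : ℝ) : ℝ :=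
  evenRamps h N t - evenRamps h N (t - h)

lemma zigzag_mem_Icc (hh : 0 ≤ h) (N : ℕ) (t : ℝ) : zigzag h N t ∈ Set.Icc 0 h := by
  have hmono := monotone_evenRamps (h := h) N (show t - h ≤ t by linarith)
  have hlip := evenRamps_sub_evenRamps_le hh N (show t - h ≤ t by linarith)
  constructor <;> rw [zigzag] <;> linarith

lemma lipschitzWith_zigzag (hh : 0 ≤ h) (N : ℕ) : LipschitzWith 1 (zigzag h N) := by
  refine LipschitzWith.of_le_add_mul 1 fun s t => ?_
  rw [NNReal.coe_one, one_mul, Real.dist_eq, zigzag, zigzag]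
  rcases le_total s t with hst | hts
  · have h₁ := monotone_evenRamps (h := h) N hst
    have h₂ := evenRamps_sub_evenRamps_le hh N (show s - h ≤ t - h by linarith)
    linarith [neg_abs_le (s - t)]
  · have h₁ := monotone_evenRamps (h := h) N (show t - h ≤ s - h by linarith)
    have h₂ := evenRamps_sub_evenRamps_le hh N hts
    linarith [le_abs_self (s - t)]

end Ramps

section LocLip

variable {X : Type*} [MetricSpace X]

lemma LipschitzWith.locLip {C : ℝ≥0} {g : X → ℝ} (hg : LipschitzWith C g) : LocLip g :=
  fun _ _ => ⟨C, hg.lipschitzOnWith⟩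

lemma LocLip.add {g₁ g₂ : X → ℝ} (h₁ : LocLip g₁) (h₂ : LocLip g₂) : LocLip (g₁ + g₂) :=
  fun K hK => by
    obtain ⟨C₁, hC₁⟩ := h₁ K hK
    obtain ⟨C₂, hC₂⟩ := h₂ K hK
    exact ⟨C₁ + C₂, hC₁.add hC₂⟩

lemma LocLip.sub {g₁ g₂ : X → ℝ} (h₁ : LocLip g₁) (h₂ : LocLip g₂) : LocLip (g₁ - g₂) :=
  fun K hK => by
    obtain ⟨C₁, hC₁⟩ := h₁ K hK
    obtain ⟨C₂, hC₂⟩ := h₂ K hK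
    exact ⟨C₁ + C₂, hC₁.sub hC₂⟩

lemma LocLip.sum {ι : Type*} (s : Finset ι) {W : ι → X → ℝ} (hW : ∀ m, LocLip (W m)) :
    LocLip fun x => ∑ m ∈ s, W m x := by
  simpa only [← Finset.sum_apply] using
    Finset.sum_induction W LocLip (fun _ _ => LocLip.add) (LipschitzWith.const 0).locLip
      fun m _ => hW m

lemma LocLipConvSeq.const {g : X → ℝ} (hg : LocLip g) : LocLipConvSeq (fun _ => g) g :=
  ⟨fun _ => tendsto_const_nhds, fun K hK => (hg K hK).imp fun _ hC => ⟨hC, fun _ => hC⟩⟩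

lemma LocLipConvSeq.comp {u : X → ℝ} {Cu C : ℝ≥0} (hu : LipschitzWith Cu u)
    {φs : ℕ → ℝ → ℝ} {φ : ℝ → ℝ} (hφs : ∀ n, LipschitzWith C (φs n)) (hφ : LipschitzWith C φ)
    (hlim : ∀ t, Tendsto (fun n => φs n t) atTop (𝓝 (φ t))) :
    LocLipConvSeq (fun n => φs n ∘ u) (φ ∘ u) :=
  ⟨fun x => hlim (u x), fun _ _ =>
    ⟨C * Cu, (hφ.comp hu).lipschitzOnWith, fun n => ((hφs n).comp hu).lipschitzOnWith⟩⟩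

variable {k : ℕ}

lemma IsLipForm.update {f : X → ℝ} {g : Fin k → X → ℝ} (hfg : IsLipForm f g) (l : Fin k)
    {h : X → ℝ} (hh : LocLip h) : IsLipForm f (Function.update g l h) :=
  ⟨hfg.1, hfg.2.1, fun m => by
    rcases eq_or_ne m l with rfl | hm
    · simpa using hh
    · simpa [Function.update_of_ne hm] using hfg.2.2 m⟩

lemma IsLipForm.mul_right {f θ : X → ℝ} {g : Fin k → X → ℝ} (hfg : IsLipForm f g)
    {Cθ : ℝ≥0} (hθ : LipschitzWith Cθ θ) {B : ℝ} (hθB : ∀ x, |θ x| ≤ B) :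
    IsLipForm (fun x => f x * θ x) g := by
  obtain ⟨⟨Cf, hf⟩, hsupp, hg⟩ := hfg
  obtain ⟨A, hA⟩ := hsupp.exists_bound_of_continuous hf.continuous
  refine ⟨⟨Real.toNNReal (B * Cf + A * Cθ), LipschitzWith.of_dist_le_mul fun x y => ?_⟩,
    hsupp.mul_right, hg⟩
  have hB : 0 ≤ B := (abs_nonneg _).trans (hθB x)
  have hA0 : 0 ≤ A := (norm_nonneg _).trans (hA x)
  have hfxy := hf.dist_le_mul x y
  have hθxy := hθ.dist_le_mul x y
  rw [Real.dist_eq] at hfxy hθxy ⊢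
  rw [Real.coe_toNNReal _ (by positivity)]
  calc |f x * θ x - f y * θ y| = |θ x * (f x - f y) + f y * (θ x - θ y)| := by ring_nf
    _ ≤ |θ x| * |f x - f y| + |f y| * |θ x - θ y| := by
      rw [← abs_mul, ← abs_mul]; exact abs_add_le _ _
    _ ≤ B * (Cf * dist x y) + A * (Cθ * dist x y) := by
      gcongr
      · exact hθB x
      · exact hA y
    _ = (B * Cf + A * Cθ) * dist x y := by ring

end LocLip

namespace MetricCurrent

open Function

variable {X : Type*} [MetricSpace X] {k : ℕ} (T : MetricCurrent X k) {f : X → ℝ}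
  {g : Fin k → X → ℝ}

theorem toFun_update_add (hfg : IsLipForm f g) (l : Fin k) {h₁ h₂ : X → ℝ} (hh₁ : LocLip h₁)
    (hh₂ : LocLip h₂) :
    T.toFun f (update g l (h₁ + h₂)) = T.toFun f (update g l h₁) + T.toFun f (update g l h₂) := by
  have h := T.add_right f (update g l h₁) l h₂ (hfg.update l hh₁) hh₂
  simp only [update_self, update_idem] at h
  exact h

theorem toFun_update_eq_zero (hfg : IsLipForm f g) (l : Fin k) {h : X → ℝ} (hh : LocLip h)
    (hconst : ∀ x ∈ tsupport f, ∀ y ∈ tsupport f, h x = h y) :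
    T.toFun f (update g l h) = 0 :=
  T.locality f _ (hfg.update l hh) ⟨l, by simpa using hconst⟩

theorem toFun_eq_zero_of_separated (hfg : IsLipForm f g) {u : X → ℝ} {Cu : ℝ≥0}
    (hu : LipschitzWith Cu u) {p q : ℝ} (hpq : p < q) {l₁ l₂ : Fin k}
    (h₁ : ∀ x y, p ≤ u x → p ≤ u y → g l₁ x = g l₁ y)
    (h₂ : ∀ x y, u x ≤ q → u y ≤ q → g l₂ x = g l₂ y) :
    T.toFun f g = 0 := by
  -- `θ = q - p` on `{u ≤ p}` and `θ = 0` on `{q ≤ u}`, so `f θ` lives where slot `l₂` is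
  -- constant and `f (q - p - θ)` where slot `l₁` is
  set θ : X → ℝ := fun x => ramp (q - p) (q - u x)
  have hθlip : LipschitzWith (1 * (0 + Cu)) θ :=
    (lipschitzWith_ramp _).comp ((LipschitzWith.const q).sub hu)
  have hθmem : ∀ x, θ x ∈ Set.Icc 0 (q - p) := fun x =>
    ⟨le_max_left _ _, max_le (by linarith) (min_le_right _ _)⟩
  have hf₁ : IsLipForm (fun x => f x * θ x) g :=
    hfg.mul_right hθlip fun x => abs_le.2 ⟨by linarith [(hθmem x).1], (hθmem x).2⟩
  have hf₂ : IsLipForm (fun x => f x * (q - p - θ x)) g :=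
    hfg.mul_right ((LipschitzWith.const (q - p)).sub hθlip) (B := q - p)
      fun x => abs_le.2 ⟨by linarith [(hθmem x).2], by linarith [(hθmem x).1]⟩
  have hsupp₁ : tsupport (fun x => f x * θ x) ⊆ {x | u x ≤ q} :=
    tsupport_mul_subset_right.trans <| closure_minimal
      (fun x hx => show u x ≤ q from not_lt.1 fun hqx => hx (ramp_of_nonpos (by linarith)))
      (isClosed_le hu.continuous continuous_const)
  have hsupp₂ : tsupport (fun x => f x * (q - p - θ x)) ⊆ {x | p ≤ u x} :=
    tsupport_mul_subset_right.trans <| closure_minimal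
      (fun x hx => show p ≤ u x from not_lt.1 fun hxp =>
        hx (sub_eq_zero.2 (ramp_of_le (by linarith) (by linarith)).symm))
      (isClosed_le continuous_const hu.continuous)
  have hsplit : (q - p) * T.toFun f g =
      T.toFun (fun x => f x * θ x) g + T.toFun (fun x => f x * (q - p - θ x)) g := by
    rw [← T.smul_left _ _ _ hfg, ← T.add_left _ _ _ hf₁ hf₂]
    congr 1; funext x; ring
  rw [T.locality _ _ hf₁ ⟨l₂, fun x hx y hy => h₂ x y (hsupp₁ hx) (hsupp₁ hy)⟩,
    T.locality _ _ hf₂ ⟨l₁, fun x hx y hy => h₁ x y (hsupp₂ hx) (hsupp₂ hy)⟩, add_zero] at hsplit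
  exact (mul_eq_zero.1 hsplit).resolve_left (by linarith)

theorem toFun_update_congr (hfg : IsLipForm f g) (l : Fin k) {h h' : X → ℝ} (hh : LocLip h)
    (hh' : LocLip h') (heq : Set.EqOn h h' (tsupport f)) :
    T.toFun f (update g l h) = T.toFun f (update g l h') := by
  have hsplit := T.toFun_update_add hfg l hh' (hh.sub hh')
  rw [add_sub_cancel, T.toFun_update_eq_zero hfg l (hh.sub hh') fun x hx y hy => by
    simp [heq hx, heq hy], add_zero] at hsplit
  exact hsplit

def toFun₂ (f : X → ℝ) (g : Fin k → X → ℝ) (i j : Fin k) (v w : X → ℝ) : ℝ :=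
  T.toFun f (update (update g i v) j w)

variable {i j : Fin k} {v v' w w' : X → ℝ}

theorem toFun₂_comm (hij : i ≠ j) : T.toFun₂ f g i j v w = T.toFun₂ f g j i w v := by
  rw [toFun₂, toFun₂, update_comm hij]

theorem toFun₂_add_right (hfg : IsLipForm f g) (hv : LocLip v) (hw : LocLip w)
    (hw' : LocLip w') :
    T.toFun₂ f g i j v (w + w') = T.toFun₂ f g i j v w + T.toFun₂ f g i j v w' :=
  T.toFun_update_add (hfg.update i hv) j hw hw'

theorem toFun₂_add_left (hfg : IsLipForm f g) (hij : i ≠ j) (hv : LocLip v) (hv' : LocLip v')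
    (hw : LocLip w) :
    T.toFun₂ f g i j (v + v') w = T.toFun₂ f g i j v w + T.toFun₂ f g i j v' w := by
  simp only [T.toFun₂_comm hij (w := w)]
  exact T.toFun₂_add_right hfg hw hv hv'

theorem toFun₂_sub_right (hfg : IsLipForm f g) (hv : LocLip v) (hw : LocLip w)
    (hw' : LocLip w') :
    T.toFun₂ f g i j v (w - w') = T.toFun₂ f g i j v w - T.toFun₂ f g i j v w' := by
  have h := T.toFun₂_add_right (i := i) (j := j) hfg hv (hw.sub hw') hw'
  rw [sub_add_cancel] at h
  linarith

theorem toFun₂_sub_left (hfg : IsLipForm f g) (hij : i ≠ j) (hv : LocLip v) (hv' : LocLip v')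
    (hw : LocLip w) :
    T.toFun₂ f g i j (v - v') w = T.toFun₂ f g i j v w - T.toFun₂ f g i j v' w := by
  simp only [T.toFun₂_comm hij (w := w)]
  exact T.toFun₂_sub_right hfg hw hv hv'

theorem toFun₂_add_self (hfg : IsLipForm f g) (hij : i ≠ j) (hv : LocLip v) (hw : LocLip w) :
    T.toFun₂ f g i j (v + w) (v + w) = T.toFun₂ f g i j v v + T.toFun₂ f g i j v w +
      T.toFun₂ f g i j w v + T.toFun₂ f g i j w w := by
  rw [T.toFun₂_add_left hfg hij hv hw (hv.add hw), T.toFun₂_add_right hfg hv hv hw,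
    T.toFun₂_add_right hfg hw hv hw]
  ring

theorem toFun₂_sub_self (hfg : IsLipForm f g) (hij : i ≠ j) (hv : LocLip v) (hw : LocLip w) :
    T.toFun₂ f g i j (v - w) (v - w) = T.toFun₂ f g i j v v - T.toFun₂ f g i j v w -
      T.toFun₂ f g i j w v + T.toFun₂ f g i j w w := by
  rw [T.toFun₂_sub_left hfg hij hv hw (hv.sub hw), T.toFun₂_sub_right hfg hv hv hw,
    T.toFun₂_sub_right hfg hw hv hw]
  ring

theorem toFun₂_const_right (hfg : IsLipForm f g) (hv : LocLip v) (c : ℝ) :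
    T.toFun₂ f g i j v (fun _ => c) = 0 :=
  T.toFun_update_eq_zero (hfg.update i hv) j (LipschitzWith.const c).locLip fun _ _ _ _ => rfl

theorem toFun₂_const_left (hfg : IsLipForm f g) (hij : i ≠ j) (hw : LocLip w) (c : ℝ) :
    T.toFun₂ f g i j (fun _ => c) w = 0 := by
  rw [T.toFun₂_comm hij, T.toFun₂_const_right hfg hw]

theorem toFun₂_add_const (hfg : IsLipForm f g) (hij : i ≠ j) (hv : LocLip v) (hw : LocLip w)
    (a b : ℝ) :
    T.toFun₂ f g i j (v + fun _ => a) (w + fun _ => b) = T.toFun₂ f g i j v w := by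
  have hconst : ∀ c : ℝ, LocLip fun _ : X => c := fun c => (LipschitzWith.const c).locLip
  rw [T.toFun₂_add_left hfg hij hv (hconst a) (hw.add (hconst b)),
    T.toFun₂_const_left hfg hij (hw.add (hconst b)), add_zero,
    T.toFun₂_add_right hfg hv hw (hconst b), T.toFun₂_const_right hfg hv, add_zero]

theorem toFun₂_congr (hfg : IsLipForm f g) (hij : i ≠ j) (hv : LocLip v) (hv' : LocLip v')
    (hw : LocLip w) (hw' : LocLip w') (hvv' : Set.EqOn v v' (tsupport f))
    (hww' : Set.EqOn w w' (tsupport f)) : T.toFun₂ f g i j v w = T.toFun₂ f g i j v' w' := by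
  rw [toFun₂, T.toFun_update_congr (hfg.update i hv) j hw hw' hww', ← toFun₂,
    T.toFun₂_comm hij, T.toFun₂_comm hij, toFun₂, toFun₂,
    T.toFun_update_congr (hfg.update j hw') i hv hv' hvv']

theorem tendsto_toFun₂ (hfg : IsLipForm f g) {vs ws : ℕ → X → ℝ} (hv : LocLipConvSeq vs v)
    (hw : LocLipConvSeq ws w) :
    Tendsto (fun n => T.toFun₂ f g i j (vs n) (ws n)) atTop (𝓝 (T.toFun₂ f g i j v w)) := by
  obtain ⟨⟨C, hC⟩, hsupp, hg⟩ := hfg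
  refine T.continuity (fun _ => f) _ f _ ⟨fun _ => tendsto_const_nhds, ⟨C, hC, fun _ => hC⟩,
    ⟨tsupport f, hsupp, subset_rfl, fun _ => subset_rfl⟩⟩ fun l => ?_
  rcases eq_or_ne l j with rfl | hlj
  · simpa using hw
  rcases eq_or_ne l i with rfl | hli
  · simpa [update_of_ne hlj] using hv
  simpa [update_of_ne hlj, update_of_ne hli] using LocLipConvSeq.const (hg l)

theorem toFun₂_sum_right (hfg : IsLipForm f g) (hv : LocLip v) {ι : Type*} (s : Finset ι)
    {W : ι → X → ℝ} (hW : ∀ m, LocLip (W m)) :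
    T.toFun₂ f g i j v (fun x => ∑ m ∈ s, W m x) = ∑ m ∈ s, T.toFun₂ f g i j v (W m) := by
  classical
  induction s using Finset.induction_on with
  | empty => exact T.toFun₂_const_right hfg hv 0
  | insert m s hm ih =>
    simp only [Finset.sum_insert hm]
    rw [← ih]
    exact T.toFun₂_add_right hfg hv (hW m) (LocLip.sum s hW)

theorem toFun₂_sum_left (hfg : IsLipForm f g) (hij : i ≠ j) (hw : LocLip w) {ι : Type*}
    (s : Finset ι) {V : ι → X → ℝ} (hV : ∀ m, LocLip (V m)) :
    T.toFun₂ f g i j (fun x => ∑ m ∈ s, V m x) w = ∑ m ∈ s, T.toFun₂ f g i j (V m) w := by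
  simp only [T.toFun₂_comm hij (w := w)]
  exact T.toFun₂_sum_right hfg hw s hV

variable {u : X → ℝ} {Cu Cφ Cψ : ℝ≥0} {φ ψ : ℝ → ℝ}

theorem toFun₂_comp_eq_zero_of_lt (hfg : IsLipForm f g) (hij : i ≠ j) (hu : LipschitzWith Cu u)
    (hφ : LipschitzWith Cφ φ) (hψ : LipschitzWith Cψ ψ) {p q : ℝ} (hpq : p < q)
    (hφp : ∀ t, p ≤ t → φ t = φ p) (hψq : ∀ t, t ≤ q → ψ t = ψ q) :
    T.toFun₂ f g i j (φ ∘ u) (ψ ∘ u) = 0 :=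
  T.toFun_eq_zero_of_separated ((hfg.update i (hφ.comp hu).locLip).update j (hψ.comp hu).locLip)
    hu hpq (l₁ := i) (l₂ := j)
    (fun x y hx hy => by simp [update_of_ne hij, hφp _ hx, hφp _ hy])
    (fun x y hx hy => by simp [hψq _ hx, hψq _ hy])

theorem toFun₂_comp_eq_zero_of_le (hfg : IsLipForm f g) (hij : i ≠ j) (hu : LipschitzWith Cu u)
    (hφ : LipschitzWith Cφ φ) (hψ : LipschitzWith Cψ ψ) {p q : ℝ} (hpq : p ≤ q)
    (hφp : ∀ t, p ≤ t → φ t = φ p) (hψq : ∀ t, t ≤ q → ψ t = ψ q) :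
    T.toFun₂ f g i j (φ ∘ u) (ψ ∘ u) = 0 := by
  -- freeze `φ` a little before `p` to separate strictly, then let the gap close
  set ε : ℕ → ℝ := fun n => 1 / (n + 1)
  have hε : Tendsto ε atTop (𝓝 0) := tendsto_one_div_add_atTop_nhds_zero_nat
  set φs : ℕ → ℝ → ℝ := fun n t => φ (min t (p - ε n))
  have hφs : ∀ n, LipschitzWith Cφ (φs n) := fun n => by
    have h := hφ.comp (LipschitzWith.id.min_const (p - ε n))
    rwa [mul_one] at h
  have hlim : ∀ t, Tendsto (fun n => φs n t) atTop (𝓝 (φ t)) := by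
    intro t
    have hmin := (tendsto_const_nhds (x := t)).min ((tendsto_const_nhds (x := p)).sub hε)
    rw [sub_zero] at hmin
    have hφt : φ (min t p) = φ t := by
      rcases le_total t p with htp | hpt
      · rw [min_eq_left htp]
      · rw [min_eq_right hpt, hφp t hpt]
    exact hφt ▸ (hφ.continuous.tendsto _).comp hmin
  have hzero : ∀ n, T.toFun₂ f g i j (φs n ∘ u) (ψ ∘ u) = 0 := fun n =>
    T.toFun₂_comp_eq_zero_of_lt hfg hij hu (hφs n) hψ
      (show p - ε n < q by linarith [Nat.one_div_pos_of_nat (α := ℝ) (n := n)])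
      (fun t ht => by simp only [φs, min_eq_right ht, min_self]) hψq
  have hconv := T.tendsto_toFun₂ (i := i) (j := j) hfg (LocLipConvSeq.comp hu hφs hφ hlim)
    (LocLipConvSeq.const (hψ.comp hu).locLip)
  simp only [hzero] at hconv
  exact tendsto_nhds_unique hconv tendsto_const_nhds

theorem toFun₂_comp_eq_zero_of_le' (hfg : IsLipForm f g) (hij : i ≠ j) (hu : LipschitzWith Cu u)
    (hφ : LipschitzWith Cφ φ) (hψ : LipschitzWith Cψ ψ) {p q : ℝ} (hpq : p ≤ q)
    (hφq : ∀ t, t ≤ q → φ t = φ q) (hψp : ∀ t, p ≤ t → ψ t = ψ p) :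
    T.toFun₂ f g i j (φ ∘ u) (ψ ∘ u) = 0 := by
  rw [T.toFun₂_comm hij]
  exact T.toFun₂_comp_eq_zero_of_le hfg hij.symm hu hψ hφ hpq hψp hφq

theorem toFun₂_sum_ramps_eq_zero (hfg : IsLipForm f g) (hij : i ≠ j) (hu : LipschitzWith Cu u)
    {h : ℝ} (hh : 0 ≤ h) (s s' : Finset ℕ) {a b : ℕ → ℝ}
    (hab : ∀ m ∈ s, ∀ m' ∈ s', a m + h ≤ b m' ∨ b m' + h ≤ a m) :
    T.toFun₂ f g i j (fun x => ∑ m ∈ s, ramp h (u x - a m))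
      (fun x => ∑ m ∈ s', ramp h (u x - b m)) = 0 := by
  have hlip : ∀ c, LipschitzWith 1 fun t => ramp h (t - c) := fun c => by
    have h' := (lipschitzWith_ramp h).comp (LipschitzWith.id.sub (LipschitzWith.const c))
    rwa [add_zero, mul_one] at h'
  have hloc : ∀ c, LocLip fun x => ramp h (u x - c) := fun c => ((hlip c).comp hu).locLip
  rw [T.toFun₂_sum_left hfg hij (LocLip.sum s' fun m => hloc (b m)) s fun m => hloc (a m)]
  refine Finset.sum_eq_zero fun m hm => ?_
  rw [T.toFun₂_sum_right hfg (hloc (a m)) s' fun m' => hloc (b m')]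
  refine Finset.sum_eq_zero fun m' hm' => ?_
  have hlow : ∀ c t, t ≤ c → ramp h (t - c) = ramp h (c - c) := fun c t ht => by
    rw [sub_self, ramp_of_nonpos (by linarith), ramp_of_nonpos le_rfl]
  have hhigh : ∀ c t, c + h ≤ t → ramp h (t - c) = ramp h (c + h - c) := fun c t ht => by
    rw [add_sub_cancel_left, ramp_of_le hh (by linarith), ramp_of_le hh le_rfl]
  rcases hab m hm m' hm' with hle | hle
  · exact T.toFun₂_comp_eq_zero_of_le hfg hij hu (hlip (a m)) (hlip (b m')) hle
      (hhigh (a m)) (hlow (b m'))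
  · exact T.toFun₂_comp_eq_zero_of_le' hfg hij hu (hlip (a m)) (hlip (b m')) hle
      (hlow (a m)) (hhigh (b m'))

theorem toFun₂_self_eq_toFun₂_zigzag (hfg : IsLipForm f g) (hij : i ≠ j)
    (hu : LipschitzWith Cu u) {h : ℝ} (hh : 0 ≤ h) (N : ℕ)
    (hrange : ∀ x ∈ tsupport f, u x ∈ Set.Icc 0 (2 * N * h)) :
    T.toFun₂ f g i j u u = T.toFun₂ f g i j (zigzag h N ∘ u) (zigzag h N ∘ u) := by
  set E : X → ℝ := fun x => evenRamps h N (u x)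
  set O : X → ℝ := fun x => evenRamps h N (u x - h)
  have hE : LocLip E := ((lipschitzWith_evenRamps hh N).comp hu).locLip
  have hO : LocLip O :=
    ((lipschitzWith_evenRamps hh N).comp (hu.sub (LipschitzWith.const h))).locLip
  have hu_eq : Set.EqOn u (E + O) (tsupport f) := fun x hx =>
    ((evenRamps_add_evenRamps_sub hh N (u x)).trans (ramp_of_mem_Icc (hrange x hx))).symm
  have hcross : ∀ m m' : ℕ, 2 * m * h + h ≤ h + 2 * m' * h ∨ h + 2 * m' * h + h ≤ 2 * m * h := by
    intro m m'
    rcases le_or_gt m m' with hmm' | hmm'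
    · left
      have : (m : ℝ) ≤ m' := by exact_mod_cast hmm'
      nlinarith
    · right
      have : (m' : ℝ) + 1 ≤ m := by exact_mod_cast hmm'
      nlinarith
  have hEO : T.toFun₂ f g i j E O = 0 := by
    simp only [E, O, evenRamps, sub_sub]
    exact T.toFun₂_sum_ramps_eq_zero hfg hij hu hh _ _ fun m _ m' _ => hcross m m'
  have hOE : T.toFun₂ f g i j O E = 0 := by
    simp only [E, O, evenRamps, sub_sub]
    exact T.toFun₂_sum_ramps_eq_zero hfg hij hu hh _ _ fun m _ m' _ => (hcross m' m).symm
  rw [T.toFun₂_congr hfg hij hu.locLip (hE.add hO) hu.locLip (hE.add hO) hu_eq hu_eq,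
    T.toFun₂_add_self hfg hij hE hO, show zigzag h N ∘ u = E - O from rfl,
    T.toFun₂_sub_self hfg hij hE hO, hEO, hOE]
  ring

theorem toFun₂_self_eq_zero_of_lipschitzWith (hfg : IsLipForm f g) (hij : i ≠ j)
    (hu : LipschitzWith Cu u) {L : ℝ} (hL : 0 ≤ L)
    (hrange : ∀ x ∈ tsupport f, u x ∈ Set.Icc 0 L) :
    T.toFun₂ f g i j u u = 0 := by
  set h : ℕ → ℝ := fun n => L / (n + 1)
  have hh : ∀ n, 0 ≤ h n := fun n => by positivity
  have hh₀ : Tendsto h atTop (𝓝 0) := by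
    simpa [h, div_eq_mul_inv] using tendsto_one_div_add_atTop_nhds_zero_nat.const_mul L
  have heq : ∀ n, T.toFun₂ f g i j u u =
      T.toFun₂ f g i j (zigzag (h n) (n + 1) ∘ u) (zigzag (h n) (n + 1) ∘ u) := fun n =>
    T.toFun₂_self_eq_toFun₂_zigzag hfg hij hu (hh n) (n + 1) fun x hx =>
      ⟨(hrange x hx).1, (hrange x hx).2.trans (by
        rw [show 2 * ((n + 1 : ℕ) : ℝ) * h n = 2 * L by simp only [h]; push_cast; field_simp]
        linarith)⟩
  have hzigzag : LocLipConvSeq (fun n => zigzag (h n) (n + 1) ∘ u) ((fun _ => 0) ∘ u) :=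
    LocLipConvSeq.comp hu (fun n => lipschitzWith_zigzag (hh n) (n + 1)) (LipschitzWith.const' 0)
      fun t => squeeze_zero (fun n => (zigzag_mem_Icc (hh n) _ t).1)
        (fun n => (zigzag_mem_Icc (hh n) _ t).2) hh₀
  have hconv := T.tendsto_toFun₂ (i := i) (j := j) hfg hzigzag hzigzag
  rw [Function.comp_def, T.toFun₂_const_left hfg hij (LipschitzWith.const 0).locLip] at hconv
  simp only [← heq] at hconv
  exact tendsto_nhds_unique tendsto_const_nhds hconv

theorem toFun₂_self_eq_zero (hfg : IsLipForm f g) (hij : i ≠ j) (hv : LocLip v) :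
    T.toFun₂ f g i j v v = 0 := by
  obtain ⟨C, hC⟩ := hv _ hfg.2.1
  obtain ⟨w, hw, hvw⟩ := hC.extend_real
  obtain ⟨R, hR₀, hR⟩ :=
    (hfg.2.1.image_of_continuousOn hw.continuous.continuousOn).isBounded.exists_pos_norm_le
  have hbound : ∀ x ∈ tsupport f, |w x| ≤ R := fun x hx => hR _ ⟨x, hx, rfl⟩
  rw [T.toFun₂_congr hfg hij hv hw.locLip hv hw.locLip hvw hvw,
    ← T.toFun₂_add_const hfg hij hw.locLip hw.locLip R R]
  exact T.toFun₂_self_eq_zero_of_lipschitzWith hfg hij (hw.add (LipschitzWith.const R))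
    (L := 2 * R) (by positivity) fun x hx => by
      have := abs_le.1 (hbound x hx)
      constructor <;> simp only [Pi.add_apply] <;> linarith

end MetricCurrent

theorem stmt17_general {X : Type*} [MetricSpace X]
    {k : ℕ} (T : MetricCurrent X k)
    (f : X → ℝ) (g : Fin k → X → ℝ) (hfg : IsLipForm f g)
    (i j : Fin k) (hij : i ≠ j) :
    T.toFun f (fun l => g (Equiv.swap i j l)) = - T.toFun f g := by
  have hgi := hfg.2.2 i
  have hgj := hfg.2.2 j
  have hpolar := T.toFun₂_add_self hfg hij hgi hgj
  rw [T.toFun₂_self_eq_zero hfg hij (hgi.add hgj), T.toFun₂_self_eq_zero hfg hij hgi,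
    T.toFun₂_self_eq_zero hfg hij hgj] at hpolar
  have hg : T.toFun₂ f g i j (g i) (g j) = T.toFun f g := by
    simp [MetricCurrent.toFun₂]
  have hswap : T.toFun₂ f g i j (g j) (g i) = T.toFun f (fun l => g (Equiv.swap i j l)) := by
    rw [T.toFun₂_comm hij, MetricCurrent.toFun₂, ← Equiv.comp_swap_eq_update]
    rfl
  linarith

/-- metric currents satisfy the alternating property:
swapping two of the Lipschitz arguments `gⁱ, gʲ` changes the sign. -/
theorem stmt17 {X : Type*} [MetricSpace X] [TopologicalSpace.SeparableSpace X]
    [LocallyCompactSpace X]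
    {k : ℕ} (T : MetricCurrent X k)
    (f : X → ℝ) (g : Fin k → X → ℝ) (hfg : IsLipForm f g)
    (i j : Fin k) (hij : i ≠ j) :
    T.toFun f (fun l => g (Equiv.swap i j l)) = - T.toFun f g :=
  stmt17_general T f g hfg i j hij
end
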